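/- arXiv:2604.26196 — 3 statements merged into one kernel-verified Lean document; each statement's English description precedes it below -/
import Mathlib

section
/- Let V be a finite-dimensional real vector space, 𝕋V = V × V* its generalized tangent space with the symmetric bilinear pairing ⟨(u,ξ),(v,η)⟩ = ξ(v) + η(u). If L ⊆ 𝕋V is a Lagrangian subspace and I ⊆ 𝕋V is an isotropic subspace (the pairing vanishes identically on I), then the subspace L[I] := (L ∩ I^⊥) + I is Lagrangian, where I^⊥ denotes the orthogonal complement of I with respect to the pairing. -/
open Module

variable {V W : Type*} [AddCommGroup V] [Module ℝ V] [AddCommGroup W] [Module ℝ W]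

/-- The canonical symmetric pairing on the generalized tangent space `𝕋V = V × V*`:
`⟨(u,ξ),(v,η)⟩ = ξ(v) + η(u)`. -/
noncomputable def gpair : (V × Module.Dual ℝ V) →ₗ[ℝ] (V × Module.Dual ℝ V) →ₗ[ℝ] ℝ :=
  LinearMap.mk₂ ℝ (fun a b => a.2 b.1 + b.2 a.1)
    (fun a a' b => by
      simp only [Prod.fst_add, Prod.snd_add, LinearMap.add_apply, map_add]; ring)
    (fun r a b => by
      simp only [Prod.smul_fst, Prod.smul_snd, LinearMap.smul_apply, map_smul,
        smul_eq_mul]; ring)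
    (fun a b b' => by
      simp only [Prod.fst_add, Prod.snd_add, LinearMap.add_apply, map_add]; ring)
    (fun r a b => by
      simp only [Prod.smul_fst, Prod.smul_snd, LinearMap.smul_apply, map_smul,
        smul_eq_mul]; ring)

/-- Orthogonal complement with respect to the canonical pairing on `𝕋V`. -/
noncomputable def gperp (S : Submodule ℝ (V × Module.Dual ℝ V)) :
    Submodule ℝ (V × Module.Dual ℝ V) where
  carrier := {a | ∀ b ∈ S, gpair a b = 0}
  add_mem' := by
    intro a b ha hb c hc
    rw [map_add, LinearMap.add_apply, ha c hc, hb c hc, add_zero]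
  zero_mem' := by
    intro c hc
    rw [map_zero, LinearMap.zero_apply]
  smul_mem' := by
    intro r a ha c hc
    rw [map_smul, LinearMap.smul_apply, ha c hc, smul_zero]

/-- A subspace of `𝕋V` is Lagrangian if it equals its own orthogonal complement. -/
def IsLagrangian (L : Submodule ℝ (V × Module.Dual ℝ V)) : Prop :=
  gperp L = L

/-- A linear map `π : V* → V` is skew-symmetric. -/
def IsSkew (π : Module.Dual ℝ V →ₗ[ℝ] V) : Prop :=
  ∀ ξ η : Module.Dual ℝ V, η (π ξ) = -(ξ (π η))

/-- The tangent product `L ⋆ R = {(u, ξ+η) : (u,ξ) ∈ L, (u,η) ∈ R}`. -/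
def tanProd (L R : Submodule ℝ (V × Module.Dual ℝ V)) :
    Submodule ℝ (V × Module.Dual ℝ V) where
  carrier := {a | ∃ ξ η : Module.Dual ℝ V, (a.1, ξ) ∈ L ∧ (a.1, η) ∈ R ∧ a.2 = ξ + η}
  add_mem' := by
    rintro a b ⟨ξ, η, h1, h2, h3⟩ ⟨ξ', η', h1', h2', h3'⟩
    refine ⟨ξ + ξ', η + η', ?_, ?_, ?_⟩
    · simpa [Prod.fst_add] using L.add_mem h1 h1'
    · simpa [Prod.fst_add] using R.add_mem h2 h2'
    · simp only [Prod.snd_add, h3, h3']; abel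
  zero_mem' := ⟨0, 0, by simp only [Prod.fst_zero, Prod.snd_zero, map_zero, LinearMap.zero_comp]; exact L.zero_mem, by simp only [Prod.fst_zero, Prod.snd_zero, map_zero, LinearMap.zero_comp]; exact R.zero_mem, by simp⟩
  smul_mem' := by
    rintro r a ⟨ξ, η, h1, h2, h3⟩
    refine ⟨r • ξ, r • η, ?_, ?_, ?_⟩
    · simpa [Prod.smul_fst] using L.smul_mem r h1
    · simpa [Prod.smul_fst] using R.smul_mem r h2
    · simp only [Prod.smul_snd, h3, smul_add]

/-- The cotangent product `L ⊛ R = {(u+v, ξ) : (u,ξ) ∈ L, (v,ξ) ∈ R}`. -/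
def cotProd (L R : Submodule ℝ (V × Module.Dual ℝ V)) :
    Submodule ℝ (V × Module.Dual ℝ V) where
  carrier := {a | ∃ u v : V, (u, a.2) ∈ L ∧ (v, a.2) ∈ R ∧ a.1 = u + v}
  add_mem' := by
    rintro a b ⟨u, v, h1, h2, h3⟩ ⟨u', v', h1', h2', h3'⟩
    refine ⟨u + u', v + v', ?_, ?_, ?_⟩
    · simpa [Prod.snd_add] using L.add_mem h1 h1'
    · simpa [Prod.snd_add] using R.add_mem h2 h2'
    · simp only [Prod.fst_add, h3, h3']; abel
  zero_mem' := ⟨0, 0, by simp only [Prod.fst_zero, Prod.snd_zero, map_zero, LinearMap.zero_comp]; exact L.zero_mem, by simp only [Prod.fst_zero, Prod.snd_zero, map_zero, LinearMap.zero_comp]; exact R.zero_mem, by simp⟩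
  smul_mem' := by
    rintro r a ⟨u, v, h1, h2, h3⟩
    refine ⟨r • u, r • v, ?_, ?_, ?_⟩
    · simpa [Prod.smul_snd] using L.smul_mem r h1
    · simpa [Prod.smul_snd] using R.smul_mem r h2
    · simp only [Prod.smul_fst, h3, smul_add]

/-- The backward image `φ^!(L) = {(u, η ∘ φ) : (φ(u), η) ∈ L}`. -/
def back (φ : V →ₗ[ℝ] W) (L : Submodule ℝ (W × Module.Dual ℝ W)) :
    Submodule ℝ (V × Module.Dual ℝ V) where
  carrier := {a | ∃ η : Module.Dual ℝ W, (φ a.1, η) ∈ L ∧ a.2 = η.comp φ}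
  add_mem' := by
    rintro a b ⟨η, h1, h2⟩ ⟨η', h1', h2'⟩
    refine ⟨η + η', ?_, ?_⟩
    · simpa [Prod.fst_add, map_add] using L.add_mem h1 h1'
    · simp only [Prod.snd_add, h2, h2', LinearMap.add_comp]
  zero_mem' := ⟨0, by simp only [Prod.fst_zero, Prod.snd_zero, map_zero, LinearMap.zero_comp]; exact L.zero_mem, by simp⟩
  smul_mem' := by
    rintro r a ⟨η, h1, h2⟩
    refine ⟨r • η, ?_, ?_⟩
    · simpa [Prod.smul_fst, map_smul] using L.smul_mem r h1
    · simp only [Prod.smul_snd, h2, LinearMap.smul_comp]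

/-- The forward image `φ_!(L) = {(φ(u), η) : (u, η ∘ φ) ∈ L}`. -/
def fwd (φ : V →ₗ[ℝ] W) (L : Submodule ℝ (V × Module.Dual ℝ V)) :
    Submodule ℝ (W × Module.Dual ℝ W) where
  carrier := {b | ∃ u : V, φ u = b.1 ∧ (u, b.2.comp φ) ∈ L}
  add_mem' := by
    rintro a b ⟨u, h1, h2⟩ ⟨u', h1', h2'⟩
    refine ⟨u + u', ?_, ?_⟩
    · simp only [map_add, h1, h1', Prod.fst_add]
    · have := L.add_mem h2 h2'
      simpa [Prod.snd_add, LinearMap.add_comp] using this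
  zero_mem' := ⟨0, by simp, by simp only [Prod.fst_zero, Prod.snd_zero, map_zero, LinearMap.zero_comp]; exact L.zero_mem⟩
  smul_mem' := by
    rintro r a ⟨u, h1, h2⟩
    refine ⟨r • u, ?_, ?_⟩
    · simp only [map_smul, h1, Prod.smul_fst]
    · have := L.smul_mem r h2
      simpa [Prod.smul_snd, LinearMap.smul_comp] using this

/-- The graph `Gr(π) = {(π(ξ), ξ) : ξ ∈ V*}` of a map `π : V* → V`. -/
def gr (π : Module.Dual ℝ V →ₗ[ℝ] V) : Submodule ℝ (V × Module.Dual ℝ V) where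
  carrier := {a | π a.2 = a.1}
  add_mem' := by
    intro a b ha hb
    simp only [Set.mem_setOf_eq, Prod.fst_add, Prod.snd_add, map_add] at *
    rw [ha, hb]
  zero_mem' := by simp
  smul_mem' := by
    intro r a ha
    simp only [Set.mem_setOf_eq, Prod.smul_fst, Prod.smul_snd, map_smul] at *
    rw [ha]

namespace LinearMap.BilinForm

section CommRing

variable {R M : Type*} [CommRing R] [AddCommGroup M] [Module R M] {B : LinearMap.BilinForm R M}

theorem orthogonal_sup (N N' : Submodule R M) :
    B.orthogonal (N ⊔ N') = B.orthogonal N ⊓ B.orthogonal N' := by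
  ext m
  simp only [Submodule.mem_inf, mem_orthogonal_iff, Submodule.mem_sup]
  constructor
  · intro h
    exact ⟨fun n hn => h n ⟨n, hn, 0, N'.zero_mem, add_zero n⟩,
      fun n' hn' => h n' ⟨0, N.zero_mem, n', hn', zero_add n'⟩⟩
  · rintro ⟨h, h'⟩ _ ⟨n, hn, n', hn', rfl⟩
    rw [map_add, LinearMap.add_apply, h n hn, h' n' hn', add_zero]

end CommRing

section Field

variable {K V : Type*} [Field K] [AddCommGroup V] [Module K V] [FiniteDimensional K V]
  {B : LinearMap.BilinForm K V}

theorem orthogonal_inf (hB : B.Nondegenerate) (hB₀ : B.IsRefl) (N N' : Submodule K V) :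
    B.orthogonal (N ⊓ N') = B.orthogonal N ⊔ B.orthogonal N' := by
  rw [← orthogonal_orthogonal hB hB₀ (_ ⊔ _), orthogonal_sup,
    orthogonal_orthogonal hB hB₀, orthogonal_orthogonal hB hB₀]

/-- `((L ⊓ Iᗮ) ⊔ I)ᗮ = (L ⊔ I) ⊓ Iᗮ`, and the modular law turns this back into `(L ⊓ Iᗮ) ⊔ I`
since `I ≤ Iᗮ`. -/
theorem orthogonal_reduction_eq (hB : B.Nondegenerate) (hB₀ : B.IsRefl)
    {L I : Submodule K V} (hL : B.orthogonal L = L) (hI : I ≤ B.orthogonal I) :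
    B.orthogonal (L ⊓ B.orthogonal I ⊔ I) = L ⊓ B.orthogonal I ⊔ I := by
  rw [orthogonal_sup, orthogonal_inf hB hB₀, hL, orthogonal_orthogonal hB hB₀, sup_comm L,
    sup_inf_assoc_of_le L hI, sup_comm]

end Field

end LinearMap.BilinForm

theorem gpair_symm (a b : V × Module.Dual ℝ V) : gpair a b = gpair b a := by
  simp only [gpair, LinearMap.mk₂_apply, add_comm]

theorem gpair_isRefl : LinearMap.BilinForm.IsRefl (gpair (V := V)) :=
  fun a b h => by rwa [gpair_symm]

theorem gpair_nondegenerate : LinearMap.BilinForm.Nondegenerate (gpair (V := V)) := by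
  refine (LinearMap.IsRefl.nondegenerate_iff_separatingLeft (R := ℝ) (M := V × Module.Dual ℝ V)
    gpair_isRefl).mpr fun a ha => ?_
  have h₂ : a.2 = 0 := LinearMap.ext fun u => by
    simpa [gpair, LinearMap.mk₂_apply] using ha (u, 0)
  have h₁ : a.1 = 0 := (Module.forall_dual_apply_eq_zero_iff ℝ a.1).mp fun η => by
    simpa [gpair, LinearMap.mk₂_apply] using ha (0, η)
  exact Prod.ext h₁ h₂

theorem gperp_eq_orthogonal (S : Submodule ℝ (V × Module.Dual ℝ V)) :
    gperp S = LinearMap.BilinForm.orthogonal gpair S := by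
  ext a
  simp only [gperp, Submodule.mem_mk, AddSubmonoid.mem_mk, AddSubsemigroup.mem_mk,
    Set.mem_ofPred_eq, LinearMap.BilinForm.mem_orthogonal_iff, gpair_symm a]

theorem stmt0 [FiniteDimensional ℝ V]
    (L I : Submodule ℝ (V × Module.Dual ℝ V))
    (hL : IsLagrangian L)
    (hI : ∀ a ∈ I, ∀ b ∈ I, gpair a b = 0) :
    IsLagrangian ((L ⊓ gperp I) ⊔ I) := by
  have hI' : I ≤ LinearMap.BilinForm.orthogonal gpair I := fun b hb a ha => hI a ha b hb
  simp only [IsLagrangian, gperp_eq_orthogonal] at hL ⊢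
  exact LinearMap.BilinForm.orthogonal_reduction_eq gpair_nondegenerate gpair_isRefl hL hI'
end

section
/- (Magri's recipe reduces to Magri's original recipe in the Poisson case) Let V be a finite-dimensional real vector space and π_L, π_R : V* → V skew-symmetric linear maps. Then the kernel of the Lagrangian subspace 𝒩 := Gr(π_L) ⋆ (Gr(π_R) ⊛ Gr(−π_L)) equals π_L(ker π_R); that is, {u ∈ V : (u, 0) ∈ 𝒩} = {π_L(ξ) : ξ ∈ V*, π_R(ξ) = 0}. Here Gr(π) := {(π(ξ), ξ) : ξ ∈ V*}, ⋆ is the tangent product and ⊛ is the cotangent product. -/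
open Module

variable {V W : Type*} [AddCommGroup V] [Module ℝ V] [AddCommGroup W] [Module ℝ W]

theorem cotProd_gr (π σ : Module.Dual ℝ V →ₗ[ℝ] V) :
    cotProd (gr π) (gr σ) = gr (π + σ) := by
  ext ⟨v, ξ⟩
  constructor
  · rintro ⟨u, w, (hu : π ξ = u), (hw : σ ξ = w), rfl⟩
    change π ξ + σ ξ = u + w
    rw [hu, hw]
  · intro (h : π ξ + σ ξ = v)
    exact ⟨π ξ, σ ξ, rfl, rfl, h.symm⟩

/-- A kernel element `(u, 0) = (u, ξ + η)` forces `η = -ξ`, so `u = π ξ = σ (-ξ)`. -/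
theorem comap_inl_tanProd_gr (π σ : Module.Dual ℝ V →ₗ[ℝ] V) :
    (tanProd (gr π) (gr σ)).comap (LinearMap.inl ℝ V (Module.Dual ℝ V))
      = (LinearMap.ker (π + σ)).map π := by
  ext u
  constructor
  · rintro ⟨ξ, η, (hξ : π ξ = u), (hη : σ η = u), hsum⟩
    obtain rfl : η = -ξ := eq_neg_of_add_eq_zero_right hsum.symm
    refine ⟨ξ, ?_, hξ⟩
    rw [map_neg] at hη
    change π ξ + σ ξ = 0
    rw [hξ, ← hη, neg_add_cancel]
  · rintro ⟨ξ, hξ, rfl⟩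
    have hσ : σ (-ξ) = π ξ := by
      rw [map_neg, neg_eq_iff_eq_neg, ← add_eq_zero_iff_eq_neg']
      exact hξ
    exact ⟨ξ, -ξ, rfl, hσ, (add_neg_cancel ξ).symm⟩

theorem stmt14_general
    (πL πR : Module.Dual ℝ V →ₗ[ℝ] V) :
    (tanProd (gr πL) (cotProd (gr πR) (gr (-πL)))).comap
        (LinearMap.inl ℝ V (Module.Dual ℝ V))
      = (LinearMap.ker πR).map πL := by
  rw [cotProd_gr, comap_inl_tanProd_gr, add_add_neg_cancel'_right]

theorem stmt14 [FiniteDimensional ℝ V]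
    (πL πR : Module.Dual ℝ V →ₗ[ℝ] V)
    (hL : IsSkew πL) (hR : IsSkew πR) :
    (tanProd (gr πL) (cotProd (gr πR) (gr (-πL)))).comap
        (LinearMap.inl ℝ V (Module.Dual ℝ V))
      = (LinearMap.ker πR).map πL :=
  stmt14_general πL πR
end

section
/- Let f, g : ℝ → ℝ be continuous functions such that for every rational number r, g(r) = q·f(r), where q is the denominator of r in lowest terms (cast to ℝ) and r is regarded as a real number via the canonical embedding. Then f(r) = 0 and g(r) = 0 for every rational number r. -/
/-! Near every rational `r` lie rationals `r + 1/n` with denominators tending to infinity.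
Along them `f = g / den` tends to `0`, because `g` converges, so `f r = 0` by continuity. -/

open Filter Topology

theorem Rat.sub_den_le_mul_den (q₁ q₂ : ℚ) : (q₁ - q₂).den ≤ q₁.den * q₂.den := by
  have hdvd : (q₁ - q₂).den ∣ q₁.den * q₂.den := by
    simpa only [sub_eq_add_neg, Rat.neg_den] using Rat.add_den_dvd q₁ (-q₂)
  exact Nat.le_of_dvd (Nat.mul_pos q₁.den_pos q₂.den_pos) hdvd

/-- Since `1/n = (r + 1/n) - r`, the denominator of `r + 1/n` is at least `n / r.den`. -/
theorem Rat.tendsto_den_add_inv_natCast (r : ℚ) :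
    Tendsto (fun n : ℕ ↦ (r + (n : ℚ)⁻¹).den) atTop atTop := by
  refine tendsto_atTop_atTop.mpr fun b ↦ ⟨b * r.den + 1, fun n hn ↦ ?_⟩
  have hle : n ≤ (r + (n : ℚ)⁻¹).den * r.den := by
    simpa [Rat.inv_natCast_den_of_pos (by omega : 0 < n)] using
      Rat.sub_den_le_mul_den (r + (n : ℚ)⁻¹) r
  exact (Nat.lt_of_mul_lt_mul_right (lt_of_lt_of_le (by omega) hle)).le

theorem Rat.exists_seq_tendsto_den_atTop (r : ℚ) :
    ∃ s : ℕ → ℚ, Tendsto (fun n ↦ (s n : ℝ)) atTop (𝓝 r) ∧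
      Tendsto (fun n ↦ ((s n).den : ℝ)) atTop atTop := by
  refine ⟨fun n ↦ r + (n : ℚ)⁻¹, ?_,
    tendsto_natCast_atTop_atTop.comp (Rat.tendsto_den_add_inv_natCast r)⟩
  have h := (tendsto_const_nhds (x := (r : ℝ))).add tendsto_inv_atTop_nhds_zero_nat
  rw [add_zero] at h
  exact h.congr fun n ↦ by push_cast; rfl

theorem eq_zero_of_tendsto_of_tendsto_mul {α : Type*} {l : Filter α} [l.NeBot] {u w : α → ℝ}
    {a b : ℝ} (hu : Tendsto u l (𝓝 a)) (hw : Tendsto w l atTop)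
    (hwu : Tendsto (fun x ↦ w x * u x) l (𝓝 b)) : a = 0 := by
  have hu0 : Tendsto u l (𝓝 0) := by
    have h := hwu.mul (tendsto_inv_atTop_zero.comp hw)
    rw [mul_zero] at h
    refine h.congr' ?_
    filter_upwards [hw.eventually_ne_atTop 0] with x hx
    simp only [Function.comp_apply]
    field_simp
  exact tendsto_nhds_unique hu hu0

theorem stmt19 (f g : ℝ → ℝ) (hf : Continuous f) (hg : Continuous g)
    (h : ∀ r : ℚ, g (r : ℝ) = (r.den : ℝ) * f (r : ℝ)) :
    ∀ r : ℚ, f (r : ℝ) = 0 ∧ g (r : ℝ) = 0 := by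
  intro r
  obtain ⟨s, hs, hden⟩ := Rat.exists_seq_tendsto_den_atTop r
  have hgs : Tendsto (fun n ↦ ((s n).den : ℝ) * f (s n)) atTop (𝓝 (g r)) := by
    simpa only [Function.comp_def, h] using (hg.tendsto _).comp hs
  have hfr : f r = 0 := eq_zero_of_tendsto_of_tendsto_mul ((hf.tendsto _).comp hs) hden hgs
  exact ⟨hfr, by rw [h, hfr, mul_zero]⟩
end
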